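/- arXiv:2009.09516 — 4 statements merged into one kernel-verified Lean document; each statement's English description precedes it below -/
import Mathlib

section
/- Let p be a positive integer and β > p, and suppose β₀ := β/p is an odd integer. Then for every nonzero integer u with |u| ≥ (β₀+1)/2, the interval I_u = (β/(2u+1), β/(2u-1)) is contained in (-p, p), and U_β maps I_u onto (-p, p). -/
/-!
The substitution `t = β / x` maps `I_u` bijectively onto `(2u - 1, 2u + 1)`, where `U_β` becomes
the affine map `t ↦ p (2u - t)`, which sends that interval onto `(-p, p)`. On the same interval
`|t| > 2|u| - 1 ≥ β / p`, i.e. `|x| < p`.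
-/

/-- The signed fractional part `{t}₂`: the unique element of `(-1, 1]` with `t - {t}₂ ∈ 2ℤ`. -/
noncomputable def fract2 (t : ℝ) : ℝ := t - 2 * ⌈(t - 1) / 2⌉

/-- The Gauss-type map `U_β(x) = p·{-β/x}₂`, with `U_β(0) = 0`. -/
noncomputable def Ubeta (p β : ℝ) (x : ℝ) : ℝ := if x = 0 then 0 else p * fract2 (-β / x)

open Set

lemma fract2_eq_sub_of_mem_Ioc {t : ℝ} (m : ℤ) (ht : t ∈ Ioc (2 * (m : ℝ) - 1) (2 * m + 1)) :
    fract2 t = t - 2 * m := by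
  have hceil : ⌈(t - 1) / 2⌉ = m := by
    rw [Int.ceil_eq_iff]
    constructor <;> linarith [ht.1, ht.2]
  rw [fract2, hceil]

lemma Ubeta_const_div {p β t : ℝ} (hβ : β ≠ 0) (ht : t ≠ 0) (u : ℤ)
    (htu : t ∈ Ico (2 * (u : ℝ) - 1) (2 * u + 1)) :
    Ubeta p β (β / t) = p * (2 * u - t) := by
  have hneg : -t ∈ Ioc (2 * ((-u : ℤ) : ℝ) - 1) (2 * ((-u : ℤ) : ℝ) + 1) := by
    push_cast
    constructor <;> linarith [htu.1, htu.2]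
  rw [Ubeta, if_neg (div_ne_zero hβ ht), neg_div, div_div_cancel₀ hβ,
    fract2_eq_sub_of_mem_Ioc _ hneg]
  push_cast
  ring

lemma image_const_div_Ioo_of_pos {β c d : ℝ} (hβ : 0 < β) (hc : 0 < c) (hd : 0 < d) :
    (β / ·) '' Ioo c d = Ioo (β / d) (β / c) := by
  have hinv : Function.Involutive (β / · : ℝ → ℝ) := fun x => div_div_cancel₀ hβ.ne'
  rw [hinv.image_eq_preimage_symm]
  ext x
  simp only [mem_preimage, mem_Ioo]
  constructor
  · rintro ⟨hcx, hxd⟩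
    have hx : 0 < x := (div_pos_iff_of_pos_left hβ).1 (hc.trans hcx)
    exact ⟨(div_lt_comm₀ hx hd).1 hxd, (lt_div_comm₀ hc hx).1 hcx⟩
  · rintro ⟨hdx, hxc⟩
    have hx : 0 < x := (div_pos hβ hd).trans hdx
    exact ⟨(lt_div_comm₀ hc hx).2 hxc, (div_lt_comm₀ hx hd).2 hdx⟩

lemma image_const_div_Ioo_of_mul_pos {β c d : ℝ} (hβ : 0 < β) (hcd : 0 < c * d) :
    (β / ·) '' Ioo c d = Ioo (β / d) (β / c) := by
  rcases mul_pos_iff.1 hcd with ⟨hc, hd⟩ | ⟨hc, hd⟩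
  · exact image_const_div_Ioo_of_pos hβ hc hd
  · calc (β / ·) '' Ioo c d = Neg.neg '' ((β / ·) '' Ioo (-d) (-c)) := by
          rw [image_image, ← image_neg_Ioo, image_image]
          simp only [div_neg, neg_neg]
      _ = Ioo (β / d) (β / c) := by
          rw [image_const_div_Ioo_of_pos hβ (neg_pos.2 hd) (neg_pos.2 hc), image_neg_Ioo,
            div_neg, div_neg, neg_neg, neg_neg]

lemma image_mul_const_sub_Ioo_two_mul {p : ℝ} (hp : 0 < p) (u : ℝ) :
    (fun t => p * (2 * u - t)) '' Ioo (2 * u - 1) (2 * u + 1) = Ioo (-p) p := by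
  rw [← image_image (p * ·) (2 * u - ·), image_const_sub_Ioo, image_mul_left_Ioo hp]
  congr 1 <;> ring

lemma two_mul_abs_sub_one_lt_abs_of_mem_Ioo {u t : ℝ} (ht : t ∈ Ioo (2 * u - 1) (2 * u + 1)) :
    2 * |u| - 1 < |t| := by
  rcases abs_cases u with ⟨hu, -⟩ | ⟨hu, -⟩ <;> rw [hu] <;>
    linarith [le_abs_self t, neg_abs_le t, ht.1, ht.2]

theorem Ubeta_filling_odd_general (p : ℕ) (hp : 0 < p) (β : ℝ) (hβ : (p : ℝ) < β)
    (u : ℤ) (hu2 : (β / p + 1) / 2 ≤ |(u : ℝ)|) :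
    Set.Ioo (β / (2 * (u : ℝ) + 1)) (β / (2 * (u : ℝ) - 1)) ⊆ Set.Ioo (-(p : ℝ)) p ∧
    Ubeta p β '' Set.Ioo (β / (2 * (u : ℝ) + 1)) (β / (2 * (u : ℝ) - 1))
      = Set.Ioo (-(p : ℝ)) p := by
  have hp' : (0 : ℝ) < p := by exact_mod_cast hp
  have hβ0 : 0 < β := hp'.trans hβ
  have hβp : 1 < β / p := (one_lt_div hp').2 hβ
  set J := Ioo (2 * (u : ℝ) - 1) (2 * u + 1)
  have hJ : ∀ t ∈ J, β / p < |t| := fun t ht =>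
    (by linarith : β / p ≤ 2 * |(u : ℝ)| - 1).trans_lt (two_mul_abs_sub_one_lt_abs_of_mem_Ioo ht)
  have hJ0 : ∀ t ∈ J, t ≠ 0 := fun t ht => abs_pos.1 (by linarith [hJ t ht])
  rw [← image_const_div_Ioo_of_mul_pos hβ0 (by nlinarith [sq_abs (u : ℝ)])]
  constructor
  · rintro _ ⟨t, ht, rfl⟩
    rw [mem_Ioo, ← abs_lt, abs_div, abs_of_pos hβ0, div_lt_comm₀ (abs_pos.2 (hJ0 t ht)) hp']
    exact hJ t ht
  · rw [image_image, ← image_mul_const_sub_Ioo_two_mul hp' u]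
    exact image_congr fun t ht => Ubeta_const_div hβ0.ne' (hJ0 t ht) u (Ioo_subset_Ico_self ht)

theorem Ubeta_filling_odd (p : ℕ) (hp : 0 < p) (β : ℝ) (hβ : (p : ℝ) < β)
    (hodd : ∃ k : ℤ, β / p = 2 * (k : ℝ) + 1)
    (u : ℤ) (hu : u ≠ 0) (hu2 : (β / p + 1) / 2 ≤ |(u : ℝ)|) :
    Set.Ioo (β / (2 * (u : ℝ) + 1)) (β / (2 * (u : ℝ) - 1)) ⊆ Set.Ioo (-(p : ℝ)) p ∧
    Ubeta p β '' Set.Ioo (β / (2 * (u : ℝ) + 1)) (β / (2 * (u : ℝ) - 1))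
      = Set.Ioo (-(p : ℝ)) p :=
  Ubeta_filling_odd_general p hp β hβ u hu2
end

section
/- Let p be a positive integer, β > p, β₀ = β/p not an odd integer, and u₀ = (β₀ - {β₀}₂)/2. Then for every nonzero integer u with |u| ≥ u₀ and u ≠ ±u₀, U_β maps the fundamental interval I_u = (β/(2u+1), β/(2u-1)) onto (-p, p), while the edge fundamental intervals are I_{u₀} = (β/(2u₀+1), p) and I_{-u₀} = (-p, -β/(2u₀+1)). -/
/-! For `u ≠ 0` the interval `I_u` avoids `0`, so `x ↦ β/x` maps it bijectively onto
`(2u-1, 2u+1)`; there `-β/x + 2u ∈ (-1, 1)`, hence `U_β(x) = p(2u - β/x)`, and the affine map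
`y ↦ p(2u - y)` carries `(2u-1, 2u+1)` onto `(-p, p)`. For the edge intervals, `u₀ = ⌈(β₀-1)/2⌉ ≥ 1`
and `{β₀}₂ > -1` give `0 < β/(2u₀+1)` and `p < β/(2u₀-1)`, so `(-p, p)` only cuts `I_{u₀}` at its
right end; and `I_{-u₀} = -I_{u₀}`. -/

open Set

noncomputable def fundamentalInterval (β u : ℝ) : Set ℝ := Ioo (β / (2 * u + 1)) (β / (2 * u - 1))

theorem fundamentalInterval_neg (β u : ℝ) :
    fundamentalInterval β (-u) = -fundamentalInterval β u := by
  rw [fundamentalInterval, fundamentalInterval, neg_Ioo, ← div_neg, ← div_neg]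
  congr 2 <;> ring

theorem neg_one_lt_fract2 (t : ℝ) : -1 < fract2 t := by
  have := Int.ceil_lt_add_one ((t - 1) / 2)
  rw [fract2]
  linarith

theorem fract2_eq_sub_two_mul {t : ℝ} {n : ℤ} (h₁ : -1 < t - 2 * n) (h₂ : t - 2 * n ≤ 1) :
    fract2 t = t - 2 * n := by
  rw [fract2, (Int.ceil_eq_iff (z := n)).2 ⟨by linarith, by linarith⟩]

theorem one_le_half_sub_fract2 {t : ℝ} (ht : 1 < t) : 1 ≤ (t - fract2 t) / 2 := by
  have hceil : 0 < ⌈(t - 1) / 2⌉ := Int.ceil_pos.2 (by linarith)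
  have : (1 : ℝ) ≤ ⌈(t - 1) / 2⌉ := by exact_mod_cast hceil
  rw [fract2]
  linarith

section ConstDiv

variable {𝕜 : Type*} [Field 𝕜] [LinearOrder 𝕜] [IsStrictOrderedRing 𝕜] {a b c : 𝕜}

theorem image_const_div_Ioo_of_pos_s7 (ha : 0 < a) (hb : 0 < b) (hc : 0 < c) :
    (a / ·) '' Ioo b c = Ioo (a / c) (a / b) := by
  ext y
  constructor
  · rintro ⟨x, ⟨hbx, hxc⟩, rfl⟩
    exact ⟨div_lt_div_of_pos_left ha (hb.trans hbx) hxc, div_lt_div_of_pos_left ha hb hbx⟩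
  · rintro ⟨hcy, hyb⟩
    have hy : 0 < y := (div_pos ha hc).trans hcy
    exact ⟨a / y, ⟨(lt_div_comm₀ hb hy).2 hyb, (div_lt_comm₀ hy hc).2 hcy⟩,
      div_div_cancel₀ ha.ne'⟩

theorem image_const_div_Ioo_of_neg (ha : 0 < a) (hb : b < 0) (hc : c < 0) :
    (a / ·) '' Ioo b c = Ioo (a / c) (a / b) := by
  have hneg : (a / ·) ∘ Neg.neg = Neg.neg ∘ (a / ·) := funext fun x => div_neg a
  conv_lhs => rw [← neg_neg b, ← neg_neg c, ← image_neg_Ioo, ← image_comp, hneg, image_comp,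
    image_const_div_Ioo_of_pos_s7 ha (neg_pos.2 hc) (neg_pos.2 hb), image_neg_Ioo]
  simp only [div_neg, neg_neg]

end ConstDiv

theorem image_const_div_fundamentalInterval {β : ℝ} (hβ : 0 < β) {u : ℤ} (hu : u ≠ 0) :
    (β / ·) '' fundamentalInterval β u = Ioo (2 * (u : ℝ) - 1) (2 * u + 1) := by
  have hback : ∀ c : ℝ, β / (β / c) = c := fun c => div_div_cancel₀ hβ.ne'
  rcases hu.lt_or_gt with hu | hu
  · have hu' : (u : ℝ) ≤ -1 := by exact_mod_cast Int.le_sub_one_of_lt hu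
    have h₁ : 2 * (u : ℝ) + 1 < 0 := by linarith
    have h₂ : 2 * (u : ℝ) - 1 < 0 := by linarith
    rw [fundamentalInterval, image_const_div_Ioo_of_neg hβ (div_neg_of_pos_of_neg hβ h₁)
      (div_neg_of_pos_of_neg hβ h₂), hback, hback]
  · have hu' : (1 : ℝ) ≤ u := by exact_mod_cast hu
    have h₁ : 0 < 2 * (u : ℝ) + 1 := by linarith
    have h₂ : 0 < 2 * (u : ℝ) - 1 := by linarith
    rw [fundamentalInterval, image_const_div_Ioo_of_pos_s7 hβ (div_pos hβ h₁) (div_pos hβ h₂),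
      hback, hback]

theorem Ubeta_eqOn_fundamentalInterval (p : ℝ) {β : ℝ} (hβ : 0 < β) {u : ℤ} (hu : u ≠ 0) :
    EqOn (Ubeta p β) (fun x => p * (2 * u - β / x)) (fundamentalInterval β u) := by
  intro x hx
  obtain ⟨h₁, h₂⟩ : β / x ∈ Ioo (2 * (u : ℝ) - 1) (2 * u + 1) :=
    image_const_div_fundamentalInterval hβ hu ▸ mem_image_of_mem _ hx
  have hx : x ≠ 0 := by
    rintro rfl
    rw [div_zero] at h₁ h₂
    have : 2 * u - 1 < 0 ∧ 0 < 2 * u + 1 := ⟨by exact_mod_cast h₁, by exact_mod_cast h₂⟩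
    omega
  rw [Ubeta, if_neg hx, neg_div,
    fract2_eq_sub_two_mul (n := -u) (by push_cast; linarith) (by push_cast; linarith)]
  push_cast
  ring

theorem image_Ubeta_fundamentalInterval {p β : ℝ} (hp : 0 < p) (hβ : 0 < β) {u : ℤ}
    (hu : u ≠ 0) : Ubeta p β '' fundamentalInterval β u = Ioo (-p) p := by
  have hcomp : (fun x => p * (2 * u - β / x)) = (p * ·) ∘ (2 * (u : ℝ) - ·) ∘ (β / ·) := rfl
  rw [(Ubeta_eqOn_fundamentalInterval p hβ hu).image_eq, hcomp, image_comp, image_comp,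
    image_const_div_fundamentalInterval hβ hu, image_const_sub_Ioo, image_mul_left_Ioo hp]
  congr 1 <;> ring

theorem Ubeta_filling_and_edge_intervals_general (p : ℕ) (hp : 0 < p) (β : ℝ) (hβ : (p : ℝ) < β)
    (u₀ : ℝ) (hu₀ : u₀ = (β / p - fract2 (β / p)) / 2) :
    (∀ u : ℤ, u ≠ 0 → u₀ ≤ |(u : ℝ)| → (u : ℝ) ≠ u₀ → (u : ℝ) ≠ -u₀ →
      Ubeta p β '' Set.Ioo (β / (2 * (u : ℝ) + 1)) (β / (2 * (u : ℝ) - 1))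
        = Set.Ioo (-(p : ℝ)) p) ∧
    Set.Ioo (β / (2 * u₀ + 1)) (β / (2 * u₀ - 1)) ∩ Set.Ioo (-(p : ℝ)) p
      = Set.Ioo (β / (2 * u₀ + 1)) (p : ℝ) ∧
    Set.Ioo (β / (2 * (-u₀) + 1)) (β / (2 * (-u₀) - 1)) ∩ Set.Ioo (-(p : ℝ)) p
      = Set.Ioo (-(p : ℝ)) (-(β / (2 * u₀ + 1))) := by
  have hp₀ : (0 : ℝ) < p := by exact_mod_cast hp
  have hβ₀ : 0 < β := hp₀.trans hβ
  have hu₀_ge : 1 ≤ u₀ := hu₀ ▸ one_le_half_sub_fract2 ((one_lt_div hp₀).2 hβ)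
  have hhi : (p : ℝ) < β / (2 * u₀ - 1) := by
    have : 2 * u₀ - 1 < β / p := by linarith [neg_one_lt_fract2 (β / p)]
    rw [lt_div_iff₀ (by linarith)]
    exact (lt_div_iff₀' hp₀).1 this
  have hedge : fundamentalInterval β u₀ ∩ Ioo (-(p : ℝ)) p = Ioo (β / (2 * u₀ + 1)) p := by
    have hlo : 0 < β / (2 * u₀ + 1) := div_pos hβ₀ (by linarith)
    rw [fundamentalInterval, Ioo_inter_Ioo, max_eq_left (by linarith), min_eq_right hhi.le]
  refine ⟨fun u hu _ _ _ => image_Ubeta_fundamentalInterval hp₀ hβ₀ hu, hedge, ?_⟩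
  have hsymm : Ioo (-(p : ℝ)) p = -Ioo (-(p : ℝ)) p := by rw [neg_Ioo, neg_neg]
  change fundamentalInterval β (-u₀) ∩ _ = _
  rw [fundamentalInterval_neg, hsymm, ← inter_neg, hedge, neg_Ioo]

theorem Ubeta_filling_and_edge_intervals (p : ℕ) (hp : 0 < p) (β : ℝ) (hβ : (p : ℝ) < β)
    (hodd : ¬ ∃ k : ℤ, β / p = 2 * (k : ℝ) + 1)
    (u₀ : ℝ) (hu₀ : u₀ = (β / p - fract2 (β / p)) / 2) :
    (∀ u : ℤ, u ≠ 0 → u₀ ≤ |(u : ℝ)| → (u : ℝ) ≠ u₀ → (u : ℝ) ≠ -u₀ →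
      Ubeta p β '' Set.Ioo (β / (2 * (u : ℝ) + 1)) (β / (2 * (u : ℝ) - 1))
        = Set.Ioo (-(p : ℝ)) p) ∧
    Set.Ioo (β / (2 * u₀ + 1)) (β / (2 * u₀ - 1)) ∩ Set.Ioo (-(p : ℝ)) p
      = Set.Ioo (β / (2 * u₀ + 1)) (p : ℝ) ∧
    Set.Ioo (β / (2 * (-u₀) + 1)) (β / (2 * (-u₀) - 1)) ∩ Set.Ioo (-(p : ℝ)) p
      = Set.Ioo (-(p : ℝ)) (-(β / (2 * u₀ + 1))) :=
  Ubeta_filling_and_edge_intervals_general p hp β hβ u₀ hu₀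
end

section
/- Let p be a positive integer, β > p, β₀ = β/p not an odd integer, and u₀ = (β₀ - {β₀}₂)/2. Define x₀ = (2u₀+1)β / (2u₀(2u₀+1) + β₀). Then x₀ lies in the edge fundamental interval I_{u₀} = (β/(2u₀+1), p) and pβ/x₀² > 2. -/
lemma sub_fract2_div_two (t : ℝ) : (t - fract2 t) / 2 = ⌈(t - 1) / 2⌉ := by
  unfold fract2; ring

lemma fract2_lt_one {t : ℝ} (h : ¬ ∃ k : ℤ, t = 2 * (k : ℝ) + 1) : fract2 t < 1 := by
  have hle : (t - 1) / 2 ≤ ⌈(t - 1) / 2⌉ := Int.le_ceil _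
  have hne : t ≠ 2 * (⌈(t - 1) / 2⌉ : ℝ) + 1 := fun heq => h ⟨_, heq⟩
  unfold fract2
  contrapose! hne
  linarith

/-- The normalized point `x₀ / p`, as a function of `β₀` and `u₀`. -/
noncomputable def edgePoint (b u : ℝ) : ℝ := (2 * u + 1) * b / (2 * u * (2 * u + 1) + b)

section edgePoint

variable {b u : ℝ}

lemma edgePoint_lt_one (hb : 0 < b) (hu : 0 < u) (hbu : b < 2 * u + 1) : edgePoint b u < 1 := by
  rw [edgePoint, div_lt_one (by positivity)]
  nlinarith

lemma div_lt_edgePoint (hb : 0 < b) (hu : 0 ≤ u) (hbu : b < 2 * u + 1) :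
    b / (2 * u + 1) < edgePoint b u := by
  rw [edgePoint, div_lt_div_iff₀ (by positivity) (by positivity)]
  nlinarith

lemma two_lt_div_edgePoint_sq (hb : 0 < b) (hu : 1 ≤ u) : 2 < b / edgePoint b u ^ 2 := by
  set m := 2 * u + 1
  have hm : 3 ≤ m := by linarith
  have hkey : 2 * b * m ^ 2 < ((m - 1) * m + b) ^ 2 := by
    nlinarith [sq_nonneg (b - m), mul_pos (pow_pos (by positivity : (0 : ℝ) < m) 2)
      (by nlinarith : (0 : ℝ) < (m - 1) ^ 2 - 1)]
  have hD : 2 * u * m + b = (m - 1) * m + b := by ring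
  rw [edgePoint, hD, div_pow, div_div_eq_mul_div, lt_div_iff₀ (by positivity)]
  nlinarith [mul_pos hb hb]

end edgePoint

theorem x0_mem_edge_interval (p : ℕ) (hp : 0 < p) (β : ℝ) (hβ : (p : ℝ) < β)
    (hodd : ¬ ∃ k : ℤ, β / p = 2 * (k : ℝ) + 1)
    (u₀ : ℝ) (hu₀ : u₀ = (β / p - fract2 (β / p)) / 2)
    (x₀ : ℝ) (hx₀ : x₀ = (2 * u₀ + 1) * β / (2 * u₀ * (2 * u₀ + 1) + β / p)) :
    x₀ ∈ Set.Ioo (β / (2 * u₀ + 1)) (p : ℝ) ∧ 2 < (p : ℝ) * β / x₀ ^ 2 := by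
  have hp' : (0 : ℝ) < p := by exact_mod_cast hp
  have hb : 1 < β / p := (one_lt_div hp').mpr hβ
  have hu : 1 ≤ u₀ := by
    rw [hu₀, sub_fract2_div_two]
    exact_mod_cast Int.ceil_pos.mpr (by linarith)
  have hbu : β / p < 2 * u₀ + 1 := by linarith [fract2_lt_one hodd]
  have hβ' : β = p * (β / p) := by field_simp
  have hx : x₀ = p * edgePoint (β / p) u₀ := by rw [hx₀, edgePoint]; field_simp
  refine ⟨⟨?_, ?_⟩, ?_⟩
  · rw [hx, hβ', mul_div_assoc, ← hβ']
    exact mul_lt_mul_of_pos_left (div_lt_edgePoint (by linarith) (by linarith) hbu) hp'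
  · rw [hx]
    exact mul_lt_of_lt_one_right hp' (edgePoint_lt_one (by linarith) (by linarith) hbu)
  · have hscale : (p : ℝ) * β / x₀ ^ 2 = β / p / edgePoint (β / p) u₀ ^ 2 := by
      rw [hx]; field_simp
    rw [hscale]
    exact two_lt_div_edgePoint_sq (by linarith) hu
end

section
/- Let p be a positive integer, β > p, β₀ = β/p not an odd integer, u₀ = (β₀ - {β₀}₂)/2, and x₀ = (2u₀+1)β/(2u₀(2u₀+1)+β₀). Then the map x ↦ p(2u₀ - β/x) sends the interval (β/(2u₀+1), x₀) onto the interval (-p, -β/(2u₀+1)), and the map x ↦ p(-2u₀ - β/x) sends (-x₀, -β/(2u₀+1)) onto (β/(2u₀+1), p). -/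
theorem edge_branches_image (p : ℕ) (hp : 0 < p) (β : ℝ) (hβ : (p : ℝ) < β)
    (hodd : ¬ ∃ k : ℤ, β / p = 2 * (k : ℝ) + 1)
    (u₀ : ℝ) (hu₀ : u₀ = (β / p - fract2 (β / p)) / 2)
    (x₀ : ℝ) (hx₀ : x₀ = (2 * u₀ + 1) * β / (2 * u₀ * (2 * u₀ + 1) + β / p)) :
    (fun x : ℝ => (p : ℝ) * (2 * u₀ - β / x)) '' Set.Ioo (β / (2 * u₀ + 1)) x₀
      = Set.Ioo (-(p : ℝ)) (-(β / (2 * u₀ + 1))) ∧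
    (fun x : ℝ => (p : ℝ) * (-(2 * u₀) - β / x)) '' Set.Ioo (-x₀) (-(β / (2 * u₀ + 1)))
      = Set.Ioo (β / (2 * u₀ + 1)) (p : ℝ) := by
  have hp' : (0:ℝ) < p := by exact_mod_cast hp
  have hpne : (p:ℝ) ≠ 0 := ne_of_gt hp'
  have hβ0 : (0:ℝ) < β := hp'.trans hβ
  have hb1 : 1 < β / p := (one_lt_div hp').mpr hβ
  set n : ℤ := ⌈(β / p - 1) / 2⌉ with hn
  have hf2 : fract2 (β / p) = β / p - 2*(n:ℝ) := by unfold fract2; rw [hn]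
  have hun : u₀ = (n:ℝ) := by rw [hu₀, hf2]; ring
  have hn1 : 0 < n := Int.ceil_pos.mpr (by linarith)
  have hu1 : (1:ℝ) ≤ u₀ := by rw [hun]; exact_mod_cast hn1
  have hlow : 2*u₀ - 1 < β / p := by
    have h := Int.ceil_lt_add_one ((β / p - 1) / 2)
    rw [← hn] at h
    rw [hun]; linarith
  have hhighle : β / p ≤ 2*u₀ + 1 := by
    have h := Int.le_ceil ((β / p - 1) / 2)
    rw [← hn] at h
    rw [hun]; linarith
  have hhigh : β / p < 2*u₀ + 1 := by
    rcases lt_or_eq_of_le hhighle with h | h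
    · exact h
    · exact absurd ⟨n, by rw [h, hun]⟩ hodd
  have hc : (0:ℝ) < 2*u₀ + 1 := by linarith
  have hcne : (2*u₀ + 1 : ℝ) ≠ 0 := ne_of_gt hc
  have hβc : β < (2*u₀+1) * p := by
    have := (div_lt_iff₀ hp').mp hhigh; linarith
  have hD : (0:ℝ) < 2*u₀*(2*u₀+1)*p + β := by nlinarith
  have hDne : (2*u₀*(2*u₀+1)*p + β : ℝ) ≠ 0 := ne_of_gt hD
  have hx₀' : x₀ = (2*u₀+1)*β*p / (2*u₀*(2*u₀+1)*p + β) := by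
    rw [hx₀]; field_simp
  have hL : (0:ℝ) < β / (2*u₀+1) := div_pos hβ0 hc
  clear hx₀ hu₀ hf2 hn hodd hb1 hlow hhighle hhigh hun hn1
  -- first image
  have h₁ : (fun x : ℝ => (p : ℝ) * (2 * u₀ - β / x)) '' Set.Ioo (β / (2 * u₀ + 1)) x₀
      = Set.Ioo (-(p : ℝ)) (-(β / (2 * u₀ + 1))) := by
    ext y
    simp only [Set.mem_image, Set.mem_Ioo]
    constructor
    · rintro ⟨x, ⟨hx1, hx2⟩, rfl⟩
      have hxpos : 0 < x := lt_trans hL hx1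
      have hxne : x ≠ 0 := ne_of_gt hxpos
      have hA : β < x * (2*u₀+1) := (div_lt_iff₀ hc).mp hx1
      have hB : x * (2*u₀*(2*u₀+1)*p + β) < (2*u₀+1)*β*p := by
        rw [hx₀'] at hx2
        exact (lt_div_iff₀ hD).mp hx2
      have e1 : (p:ℝ)*(2*u₀ - β/x) = p*(2*u₀*x - β)/x := by
        field_simp
      constructor
      · rw [e1, lt_div_iff₀ hxpos]
        nlinarith [mul_pos hp' (show (0:ℝ) < x*(2*u₀+1) - β by linarith)]
      · rw [e1, div_lt_iff₀ hxpos, show -(β/(2*u₀+1)) = (-β)/(2*u₀+1) from (neg_div _ _).symm,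
          div_mul_eq_mul_div, lt_div_iff₀ hc]
        nlinarith [hB]
    · rintro ⟨hy1, hy2⟩
      have hden : (0:ℝ) < 2*p*u₀ - y := by nlinarith
      have hdenne : (2*(p:ℝ)*u₀ - y) ≠ 0 := ne_of_gt hden
      have hy2' : y * (2*u₀+1) < -β := by
        rw [← neg_div] at hy2
        exact (lt_div_iff₀ hc).mp hy2
      refine ⟨p*β/(2*p*u₀ - y), ⟨?_, ?_⟩, ?_⟩
      · rw [div_lt_div_iff₀ hc hden]
        nlinarith [mul_pos hβ0 (show (0:ℝ) < y + p by linarith)]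
      · rw [hx₀', div_lt_div_iff₀ hden hD]
        nlinarith [mul_lt_mul_of_pos_right hy2' hβ0]
      · have e2 : β / ((p:ℝ)*β/(2*p*u₀ - y)) = (2*p*u₀ - y)/p := by
          rw [div_div_eq_mul_div, mul_comm (p:ℝ) β, mul_div_mul_left _ _ (ne_of_gt hβ0)]
        show (p:ℝ) * (2*u₀ - β/((p:ℝ)*β/(2*p*u₀ - y))) = y
        rw [e2, mul_sub, mul_div_cancel₀ _ hpne]
        ring
  refine ⟨h₁, ?_⟩
  have hcomp : (fun x : ℝ => (p : ℝ) * (-(2*u₀) - β/x))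
      = Neg.neg ∘ (fun x : ℝ => (p:ℝ)*(2*u₀ - β/x)) ∘ Neg.neg := by
    funext x
    simp only [Function.comp_apply, div_neg]
    ring
  rw [hcomp, Set.image_comp, Set.image_comp, Set.image_neg_Ioo, neg_neg, neg_neg, h₁,
    Set.image_neg_Ioo, neg_neg, neg_neg]
end
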